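/- Define u̅(t,x) = ρ(t, x − ξ(t)) with ρ(t,y) = θ[1 − E(y/(2√t))/E(ξ₀)] and ξ(t) = M t^{1/2 − 1/(p+1)} for p > 1, M > 0. Then for t > 0 and x > ξ(t), u̅_t − u̅_{xx} = ((p−1)/(2(p+1))) M t^{(p−1)/(2(p+1)) − 1} · (θ/(E(ξ₀)√(πt))) e^{−(x−ξ(t))²/(4t)} ≥ 0. -/

import Mathlib

open Real

noncomputable def errE (x : ℝ) : ℝ := (2 / Real.sqrt π) * ∫ s in (0:ℝ)..x, Real.exp (-s^2)

/-! `errE (y / (2 * √t))` is a self-similar solution of the heat equation, so in the frame moving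
with the front only the transport term survives: `ū_t - ū_xx = -ξ'(t) ρ_y(t, x - ξ t)`. Here `ρ_y` is a
negative multiple of a Gaussian and `ξ' = M α t^(α - 1) ≥ 0` with `α = (p - 1) / (2 (p + 1))`. -/

theorem hasDerivAt_errE (x : ℝ) : HasDerivAt errE (2 / √π * exp (-x ^ 2)) x := by
  have hc : Continuous fun s : ℝ => exp (-s ^ 2) := by fun_prop
  exact (intervalIntegral.integral_hasDerivAt_right (hc.intervalIntegrable 0 x)
    (hc.stronglyMeasurableAtFilter _ _) hc.continuousAt).const_mul _

theorem errE_pos {x : ℝ} (hx : 0 < x) : 0 < errE x := by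
  have hc : Continuous fun s : ℝ => exp (-s ^ 2) := by fun_prop
  exact mul_pos (by positivity) <| intervalIntegral.intervalIntegral_pos_of_pos_on
    (hc.intervalIntegrable 0 x) (fun s _ => exp_pos _) hx

/-- Twice the heat kernel: the `y`-derivative of `errE (y / (2 * √t))`. -/
noncomputable def gaussianProfile (t y : ℝ) : ℝ := exp (-y ^ 2 / (4 * t)) / √(π * t)

theorem gaussianProfile_nonneg (t y : ℝ) : 0 ≤ gaussianProfile t y := by
  unfold gaussianProfile; positivity

theorem two_div_sqrt_pi_mul_exp {t : ℝ} (ht : 0 < t) (y : ℝ) :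
    2 / √π * exp (-(y / (2 * √t)) ^ 2) = 2 * √t * gaussianProfile t y := by
  have hexp : -(y / (2 * √t)) ^ 2 = -y ^ 2 / (4 * t) := by
    rw [div_pow, mul_pow, sq_sqrt ht.le]; ring
  rw [gaussianProfile, hexp, sqrt_mul pi_pos.le]
  field_simp

theorem hasDerivAt_errE_div_two_sqrt {t : ℝ} (ht : 0 < t) (y : ℝ) :
    HasDerivAt (fun y => errE (y / (2 * √t))) (gaussianProfile t y) y := by
  refine ((hasDerivAt_errE _).comp y ((hasDerivAt_id' y).div_const (2 * √t))).congr_deriv ?_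
  rw [two_div_sqrt_pi_mul_exp ht]
  field_simp

theorem hasDerivAt_gaussianProfile (t y : ℝ) :
    HasDerivAt (gaussianProfile t) (-(y / (2 * t)) * gaussianProfile t y) y := by
  refine (((hasDerivAt_pow 2 y).neg.div_const (4 * t)).exp.div_const √(π * t)).congr_deriv ?_
  simp only [gaussianProfile, Pi.neg_apply]
  ring

/-- The term `η t / (2 * t)` is the one that the heat equation balances against the second
space derivative. -/
theorem hasDerivAt_errE_div_two_sqrt_comp {η : ℝ → ℝ} {η' t : ℝ} (ht : 0 < t)
    (hη : HasDerivAt η η' t) :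
    HasDerivAt (fun τ => errE (η τ / (2 * √τ)))
      ((η' - η t / (2 * t)) * gaussianProfile t (η t)) t := by
  have hden : HasDerivAt (fun τ => 2 * √τ) (2 * (1 / (2 * √t))) t :=
    (hasDerivAt_sqrt ht.ne').const_mul 2
  refine ((hasDerivAt_errE _).comp t (hη.div hden (by positivity))).congr_deriv ?_
  rw [Pi.div_apply, two_div_sqrt_pi_mul_exp ht]
  field_simp
  rw [sq_sqrt ht.le]
  ring

theorem heat_operator_errE_moving_front {θ c t x ξ' : ℝ} {ξ : ℝ → ℝ} (ht : 0 < t)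
    (hξ : HasDerivAt ξ ξ' t) :
    deriv (fun τ => θ - c * errE ((x - ξ τ) / (2 * √τ))) t
        - deriv (deriv fun y => θ - c * errE ((y - ξ t) / (2 * √t))) x
      = c * ξ' * gaussianProfile t (x - ξ t) := by
  have htime := ((hasDerivAt_errE_div_two_sqrt_comp ht (hξ.const_sub x)).const_mul c).const_sub θ
  have hspace : deriv (fun y => θ - c * errE ((y - ξ t) / (2 * √t)))
      = fun y => -(c * gaussianProfile t (y - ξ t)) := by
    funext y
    exact (((hasDerivAt_errE_div_two_sqrt ht (y - ξ t)).comp_sub_const y (ξ t)).const_mul c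
      |>.const_sub θ).deriv
  have hspace2 :=
    ((hasDerivAt_gaussianProfile t (x - ξ t)).comp_sub_const x (ξ t)).const_mul c |>.fun_neg
  rw [htime.deriv, hspace, hspace2.deriv]
  ring

theorem upper_solution_ineq (θ ξ₀ M p : ℝ) (hθ : 0 < θ) (hξ : 0 < ξ₀)
    (hM : 0 < M) (hp : 1 < p)
    (ρ : ℝ → ℝ → ℝ)
    (hρ : ∀ t y, ρ t y = θ * (1 - errE (y / (2 * Real.sqrt t)) / errE ξ₀))
    (ξ : ℝ → ℝ) (hξ' : ∀ t, ξ t = M * t ^ ((1:ℝ)/2 - 1/(p + 1)))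
    (ub : ℝ → ℝ → ℝ) (hub : ∀ t x, ub t x = ρ t (x - ξ t)) :
    ∀ t x : ℝ, 0 < t → ξ t < x →
      deriv (fun τ => ub τ x) t - deriv (deriv (fun y => ub t y)) x
        = ((p - 1) / (2 * (p + 1))) * M * t ^ ((p - 1) / (2 * (p + 1)) - 1)
            * (θ / (errE ξ₀ * Real.sqrt (π * t))) * Real.exp (-(x - ξ t)^2 / (4 * t)) ∧
      0 ≤ deriv (fun τ => ub τ x) t - deriv (deriv (fun y => ub t y)) x := by
  intro t x ht _
  have hα : (1:ℝ) / 2 - 1 / (p + 1) = (p - 1) / (2 * (p + 1)) := by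
    field_simp [show p + 1 ≠ 0 by linarith]; ring
  set α := (p - 1) / (2 * (p + 1))
  have hξ_eq : ξ = fun τ => M * τ ^ α := funext fun τ => by rw [hξ', hα]
  have hub_eq (τ y : ℝ) : ub τ y = θ - θ / errE ξ₀ * errE ((y - ξ τ) / (2 * √τ)) := by
    rw [hub, hρ]; ring
  have hfront : HasDerivAt ξ (M * (α * t ^ (α - 1))) t := by
    rw [hξ_eq]; exact (hasDerivAt_rpow_const (Or.inl ht.ne')).const_mul M
  have heat : deriv (fun τ => ub τ x) t - deriv (deriv (fun y => ub t y)) x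
      = θ / errE ξ₀ * (M * (α * t ^ (α - 1))) * gaussianProfile t (x - ξ t) := by
    simp only [hub_eq]
    exact heat_operator_errE_moving_front ht hfront
  have hα0 : 0 ≤ α := div_nonneg (by linarith) (by linarith)
  refine ⟨by rw [heat, gaussianProfile]; ring, ?_⟩
  rw [heat]
  have hE := errE_pos hξ
  have hG := gaussianProfile_nonneg t (x - ξ t)
  positivity
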